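/- Let α > 0 and let f ∈ Λ_α(X×Y) with constant C. Then for all admissible l and s: sup |Q^lP^s f| ≤ 2C·2^{−lα}, sup |P^lQ^s f| ≤ 2C·2^{−sα}, and sup |Q^lQ^s f| ≤ 4C·2^{−(l+s)α}, where the suprema are over X×Y. -/
import Mathlib


open scoped Classical
open Finset

/-- A dyadic balanced partition tree of depth `L` on a finite set `X` with `|X| = 2^L`.
Node indices `k` are 0-based: level `l` has the nodes `k = 0, …, 2^l − 1`, and the two
children of `node l k` are `node (l+1) (2k)` and `node (l+1) (2k+1)`. -/
structure DyadicTree (X : Type) [Fintype X] (L : ℕ) where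
  node : ℕ → ℕ → Finset X
  node_zero : node 0 0 = Finset.univ
  disj : ∀ l ≤ L, ∀ k < 2 ^ l, ∀ k' < 2 ^ l, k ≠ k' → Disjoint (node l k) (node l k')
  cover : ∀ l ≤ L, ∀ x : X, ∃ k < 2 ^ l, x ∈ node l k
  children : ∀ l < L, ∀ k < 2 ^ l,
    node l k = node (l + 1) (2 * k) ∪ node (l + 1) (2 * k + 1)
  card_node : ∀ l ≤ L, ∀ k < 2 ^ l, (node l k).card = 2 ^ (L - l)

namespace DyadicTree

variable {X : Type} [Fintype X] {L : ℕ}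

/-- `x` and `x'` lie in a common level-`l` node. -/
def sameNode (T : DyadicTree X L) (l : ℕ) (x x' : X) : Prop :=
  ∃ k < 2 ^ l, x ∈ T.node l k ∧ x' ∈ T.node l k

/-- The level-`l` node containing `x`, as a `Finset`. -/
noncomputable def cell (T : DyadicTree X L) (l : ℕ) (x : X) : Finset X :=
  Finset.univ.filter fun x' => T.sameNode l x x'

/-- The averaging (scaling) operator `P^l f(x)`: the average of `f` over the level-`l`
node containing `x`. -/
noncomputable def avg (T : DyadicTree X L) (l : ℕ) (f : X → ℝ) (x : X) : ℝ :=
  (∑ y ∈ T.cell l x, f y) / (T.cell l x).card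

/-- The difference (wavelet) operator `Q^l f = P^{l+1} f − P^l f`. -/
noncomputable def Qop (T : DyadicTree X L) (l : ℕ) (f : X → ℝ) (x : X) : ℝ :=
  T.avg (l + 1) f x - T.avg l f x

/-- The tree distance `ρ(x,x')`: `0` if `x = x'`, else `2^{−l*}` where `l*` is the largest
level `l ≤ L` at which `x` and `x'` lie in a common node. -/
noncomputable def rho (T : DyadicTree X L) (x x' : X) : ℝ :=
  if x = x' then 0
  else (2 : ℝ) ^ (-((Nat.findGreatest (fun l => T.sameNode l x x') L : ℕ) : ℝ))

/-- `f ∈ Λ_β(X)` with constant `C`. -/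
def Holder (T : DyadicTree X L) (β C : ℝ) (f : X → ℝ) : Prop :=
  ∀ x x' : X, |f x - f x'| ≤ C * T.rho x x' ^ β

/-- The Haar function `ψ^l_k = 2^{l/2}(χ_{child₁} − χ_{child₂})` of the node `X^l_k`. -/
noncomputable def haar (T : DyadicTree X L) (l k : ℕ) : X → ℝ := fun x =>
  (2 : ℝ) ^ ((l : ℝ) / 2) *
    ((if x ∈ T.node (l + 1) (2 * k) then (1 : ℝ) else 0) -
      (if x ∈ T.node (l + 1) (2 * k + 1) then (1 : ℝ) else 0))

/-- The normalized inner product `⟨f,g⟩ = (1/|X|) Σ_x f(x) g(x)`. -/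
noncomputable def ip (_T : DyadicTree X L) (f g : X → ℝ) : ℝ :=
  (∑ x, f x * g x) / (Fintype.card X : ℝ)

/-- The Hölder norm `‖f‖_{Λ_β(X)} = max_{l<L, k<2^l} |⟨f,ψ^l_k⟩| / 2^{−l(β+1/2)}`. -/
noncomputable def holderNorm (T : DyadicTree X L) (β : ℝ) (f : X → ℝ) : ℝ :=
  sSup {r : ℝ | ∃ l < L, ∃ k < 2 ^ l,
    r = |T.ip f (T.haar l k)| / (2 : ℝ) ^ (-(l : ℝ) * (β + 1 / 2))}

end DyadicTree

/-- The hierarchical paraproduct approximation `Ã_L(f) = Σ_{l<L} A'(P^l f)·Q^l f`. -/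
noncomputable def Atilde1 {X : Type} [Fintype X] {L : ℕ} (T : DyadicTree X L)
    (A : ℝ → ℝ) (f : X → ℝ) : X → ℝ := fun x =>
  ∑ l ∈ Finset.range L, deriv A (T.avg l f x) * T.Qop l f x

/-- The hierarchical paraproduct residual `Δ_L(A,f) = A∘f − Ã_L(f)`. -/
noncomputable def residual1 {X : Type} [Fintype X] {L : ℕ} (T : DyadicTree X L)
    (A : ℝ → ℝ) (f : X → ℝ) : X → ℝ := fun x =>
  A (f x) - Atilde1 T A f x

section Tensor

variable {X Y : Type} [Fintype X] [Fintype Y] {L S : ℕ}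

/-- The tensor averaging operator `P^lP^s f(x,y)`: the average of `f` over `N × M`
where `N` is the level-`l` node containing `x` and `M` the level-`s` node containing `y`. -/
noncomputable def PP (TX : DyadicTree X L) (TY : DyadicTree Y S) (l s : ℕ)
    (f : X × Y → ℝ) (p : X × Y) : ℝ :=
  (∑ q ∈ (TX.cell l p.1) ×ˢ (TY.cell s p.2), f q) /
    ((TX.cell l p.1).card * (TY.cell s p.2).card)

/-- `Q^lP^s f = P^{l+1}P^s f − P^lP^s f`. -/
noncomputable def QP (TX : DyadicTree X L) (TY : DyadicTree Y S) (l s : ℕ)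
    (f : X × Y → ℝ) (p : X × Y) : ℝ :=
  PP TX TY (l + 1) s f p - PP TX TY l s f p

/-- `P^lQ^s f = P^lP^{s+1} f − P^lP^s f`. -/
noncomputable def PQ (TX : DyadicTree X L) (TY : DyadicTree Y S) (l s : ℕ)
    (f : X × Y → ℝ) (p : X × Y) : ℝ :=
  PP TX TY l (s + 1) f p - PP TX TY l s f p

/-- `Q^lQ^s f = P^{l+1}P^{s+1} f − P^{l+1}P^s f − P^lP^{s+1} f + P^lP^s f`. -/
noncomputable def QQ (TX : DyadicTree X L) (TY : DyadicTree Y S) (l s : ℕ)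
    (f : X × Y → ℝ) (p : X × Y) : ℝ :=
  PP TX TY (l + 1) (s + 1) f p - PP TX TY (l + 1) s f p - PP TX TY l (s + 1) f p
    + PP TX TY l s f p

/-- `f ∈ Λ_β(X×Y)` with constant `C`: the rectangular (mixed-difference) condition
together with the two one-variable Hölder conditions. -/
def HolderRect (TX : DyadicTree X L) (TY : DyadicTree Y S) (β C : ℝ)
    (f : X × Y → ℝ) : Prop :=
  (∀ x x' : X, ∀ y y' : Y,
      |f (x, y) - f (x', y) - f (x, y') + f (x', y')| ≤
        C * TX.rho x x' ^ β * TY.rho y y' ^ β) ∧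
  (∀ x x' : X, ∀ y : Y, |f (x, y) - f (x', y)| ≤ C * TX.rho x x' ^ β) ∧
  (∀ x : X, ∀ y y' : Y, |f (x, y) - f (x, y')| ≤ C * TY.rho y y' ^ β)

/-- The tensor Haar function `(ψ^l_k ⊗ ψ^s_r)(x,y) = ψ^l_k(x) ψ^s_r(y)`. -/
noncomputable def tensorHaar (TX : DyadicTree X L) (TY : DyadicTree Y S)
    (l k s r : ℕ) : X × Y → ℝ := fun p => TX.haar l k p.1 * TY.haar s r p.2

/-- `⟨f,g⟩ = (1/(|X||Y|)) Σ_{(x,y)} f(x,y) g(x,y)`. -/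
noncomputable def ip2 (f g : X × Y → ℝ) : ℝ :=
  (∑ p : X × Y, f p * g p) / ((Fintype.card X : ℝ) * (Fintype.card Y : ℝ))

/-- The tensor Hölder norm
`‖f‖_{Λ_β(X×Y)} = max_{l,s,k,r} |⟨f, ψ^l_k ⊗ ψ^s_r⟩| / 2^{−(l+s)(β+1/2)}`. -/
noncomputable def holderNorm2 (TX : DyadicTree X L) (TY : DyadicTree Y S)
    (β : ℝ) (f : X × Y → ℝ) : ℝ :=
  sSup {u : ℝ | ∃ l < L, ∃ s < S, ∃ k < 2 ^ l, ∃ r < 2 ^ s,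
    u = |ip2 f (tensorHaar TX TY l k s r)| /
      (2 : ℝ) ^ (-((l : ℝ) + (s : ℝ)) * (β + 1 / 2))}

/-- The hierarchical tensor paraproduct approximation
`Ã_{L,S}(f) = Σ_{l<L} Σ_{s<S} [A'(P^lP^s f)·Q^lQ^s f + A''(P^lP^s f)·(Q^lP^s f)·(P^lQ^s f)]`. -/
noncomputable def Atilde2 (TX : DyadicTree X L) (TY : DyadicTree Y S)
    (A : ℝ → ℝ) (f : X × Y → ℝ) : X × Y → ℝ := fun p =>
  ∑ l ∈ Finset.range L, ∑ s ∈ Finset.range S,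
    (deriv A (PP TX TY l s f p) * QQ TX TY l s f p +
      deriv (deriv A) (PP TX TY l s f p) * QP TX TY l s f p * PQ TX TY l s f p)

/-- The hierarchical tensor paraproduct residual `Δ_{L,S}(A,f) = A∘f − Ã_{L,S}(f)`. -/
noncomputable def residual2 (TX : DyadicTree X L) (TY : DyadicTree Y S)
    (A : ℝ → ℝ) (f : X × Y → ℝ) : X × Y → ℝ := fun p =>
  A (f p) - Atilde2 TX TY A f p

end Tensor

section AuxAvg

variable {Z : Type*}

lemma avg_sub_const {A : Finset Z} (hA : A.Nonempty) {g : Z → ℝ} {c ε : ℝ}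
    (h : ∀ a ∈ A, |g a - c| ≤ ε) :
    |(∑ a ∈ A, g a) / A.card - c| ≤ ε := by
  have hc : (0:ℝ) < A.card := by exact_mod_cast Finset.card_pos.mpr hA
  have hrw : (∑ a ∈ A, g a) / A.card - c = (∑ a ∈ A, (g a - c)) / A.card := by
    rw [Finset.sum_sub_distrib, Finset.sum_const, nsmul_eq_mul]
    field_simp
  rw [hrw, abs_div, abs_of_pos hc, div_le_iff₀ hc]
  calc |∑ a ∈ A, (g a - c)| ≤ ∑ a ∈ A, |g a - c| := Finset.abs_sum_le_sum_abs _ _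
    _ ≤ ∑ _a ∈ A, ε := Finset.sum_le_sum h
    _ = A.card * ε := by rw [Finset.sum_const, nsmul_eq_mul]
    _ = ε * A.card := by ring

lemma avg_sub_avg {A B : Finset Z} (hA : A.Nonempty) (hB : B.Nonempty) {g : Z → ℝ} {ε : ℝ}
    (h : ∀ a ∈ A, ∀ b ∈ B, |g a - g b| ≤ ε) :
    |(∑ a ∈ A, g a) / A.card - (∑ b ∈ B, g b) / B.card| ≤ ε := by
  refine avg_sub_const hA fun a ha => ?_
  rw [abs_sub_comm]
  refine avg_sub_const hB fun b hb => ?_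
  rw [abs_sub_comm]
  exact h a ha b hb

end AuxAvg

namespace DyadicTree

variable {X : Type} [Fintype X] {L : ℕ}

lemma sameNode_self' (T : DyadicTree X L) {l : ℕ} (hl : l ≤ L) (x : X) : T.sameNode l x x := by
  obtain ⟨k, hk, hx⟩ := T.cover l hl x
  exact ⟨k, hk, hx, hx⟩

lemma mem_cell_self' (T : DyadicTree X L) {l : ℕ} (hl : l ≤ L) (x : X) : x ∈ T.cell l x := by
  simp [cell, T.sameNode_self' hl x]

lemma cell_nonempty' (T : DyadicTree X L) {l : ℕ} (hl : l ≤ L) (x : X) :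
    (T.cell l x).Nonempty := ⟨x, T.mem_cell_self' hl x⟩

lemma sameNode_of_mem_cell' (T : DyadicTree X L) {l : ℕ} (hl : l ≤ L) {x a b : X}
    (ha : a ∈ T.cell l x) (hb : b ∈ T.cell l x) : T.sameNode l a b := by
  rw [cell, Finset.mem_filter] at ha hb
  obtain ⟨k1, hk1, hx1, ha1⟩ := ha.2
  obtain ⟨k2, hk2, hx2, hb2⟩ := hb.2
  have hkeq : k1 = k2 := by
    by_contra hne
    exact Finset.disjoint_left.mp (T.disj l hl k1 hk1 k2 hk2 hne) hx1 hx2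
  exact ⟨k1, hk1, ha1, hkeq ▸ hb2⟩

lemma cell_succ_subset' (T : DyadicTree X L) {l : ℕ} (hl : l < L) (x : X) :
    T.cell (l + 1) x ⊆ T.cell l x := by
  intro a ha
  rw [cell, Finset.mem_filter] at ha ⊢
  refine ⟨Finset.mem_univ _, ?_⟩
  obtain ⟨k', hk', hx', ha'⟩ := ha.2
  obtain ⟨k, hk, hx⟩ := T.cover l hl.le x
  have hchil := T.children l hl k hk
  have hx2 : x ∈ T.node (l + 1) (2 * k) ∪ T.node (l + 1) (2 * k + 1) := hchil ▸ hx
  rw [Finset.mem_union] at hx2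
  have hpow : 2 ^ (l + 1) = 2 ^ l * 2 := pow_succ 2 l
  have hmem : a ∈ T.node l k := by
    rcases hx2 with h | h
    · have : k' = 2 * k := by
        by_contra hne
        exact Finset.disjoint_left.mp
          (T.disj (l + 1) hl k' hk' (2 * k) (by omega) hne) hx' h
      rw [hchil, Finset.mem_union]; left; exact this ▸ ha'
    · have : k' = 2 * k + 1 := by
        by_contra hne
        exact Finset.disjoint_left.mp
          (T.disj (l + 1) hl k' hk' (2 * k + 1) (by omega) hne) hx' h
      rw [hchil, Finset.mem_union]; right; exact this ▸ ha'
  exact ⟨k, hk, hx, hmem⟩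

lemma rho_nonneg' (T : DyadicTree X L) (a b : X) : 0 ≤ T.rho a b := by
  rw [rho]
  split_ifs
  · exact le_rfl
  · positivity

lemma rho_le' (T : DyadicTree X L) {l : ℕ} (hl : l ≤ L) {a b : X} (h : T.sameNode l a b) :
    T.rho a b ≤ (2 : ℝ) ^ (-(l : ℝ)) := by
  rw [rho]
  split_ifs with hab
  · positivity
  · rw [Real.rpow_le_rpow_left_iff (by norm_num : (1:ℝ) < 2), neg_le_neg_iff]
    exact_mod_cast Nat.le_findGreatest hl h

lemma cell_rho_pow_le' (T : DyadicTree X L) {α : ℝ} (hα : 0 < α) {l : ℕ} (hl : l ≤ L)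
    {x a b : X} (ha : a ∈ T.cell l x) (hb : b ∈ T.cell l x) :
    T.rho a b ^ α ≤ (2 : ℝ) ^ (-(l : ℝ) * α) := by
  have h1 : T.rho a b ≤ (2 : ℝ) ^ (-(l : ℝ)) :=
    T.rho_le' hl (T.sameNode_of_mem_cell' hl ha hb)
  calc T.rho a b ^ α ≤ ((2 : ℝ) ^ (-(l : ℝ))) ^ α :=
        Real.rpow_le_rpow (T.rho_nonneg' a b) h1 hα.le
    _ = (2 : ℝ) ^ (-(l : ℝ) * α) := (Real.rpow_mul (by norm_num) _ _).symm

lemma holder_C_nonneg' (T : DyadicTree X L) (hL : 0 < L) {α C : ℝ} (hα : 0 < α)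
    {g : X → ℝ} (h : ∀ x x' : X, |g x - g x'| ≤ C * T.rho x x' ^ α) : 0 ≤ C := by
  have hcard : Fintype.card X = 2 ^ L := by
    have h0 := T.card_node 0 (Nat.zero_le L) 0 (by norm_num)
    rw [T.node_zero, Finset.card_univ] at h0
    simpa using h0
  have : Nontrivial X := by
    rw [← Fintype.one_lt_card_iff_nontrivial, hcard]
    exact Nat.one_lt_two_pow_iff.mpr (by omega)
  obtain ⟨x, x', hne⟩ := exists_pair_ne X
  have hρ : 0 < T.rho x x' := by
    rw [rho, if_neg hne]
    exact Real.rpow_pos_of_pos two_pos _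
  have ht : 0 < T.rho x x' ^ α := Real.rpow_pos_of_pos hρ α
  have h0 := (abs_nonneg _).trans (h x x')
  nlinarith

end DyadicTree

section AuxPP

variable {X Y : Type} [Fintype X] [Fintype Y] {L S : ℕ}

lemma PP_eq_y (TX : DyadicTree X L) (TY : DyadicTree Y S) (l s : ℕ)
    (f : X × Y → ℝ) (p : X × Y) :
    PP TX TY l s f p =
      (∑ y ∈ TY.cell s p.2, (∑ x ∈ TX.cell l p.1, f (x, y)) / (TX.cell l p.1).card) /
        (TY.cell s p.2).card := by
  rw [PP, Finset.sum_product]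
  rw [Finset.sum_comm]
  rw [← Finset.sum_div, div_div, mul_comm]

lemma PP_eq_x (TX : DyadicTree X L) (TY : DyadicTree Y S) (l s : ℕ)
    (f : X × Y → ℝ) (p : X × Y) :
    PP TX TY l s f p =
      (∑ x ∈ TX.cell l p.1, (∑ y ∈ TY.cell s p.2, f (x, y)) / (TY.cell s p.2).card) /
        (TX.cell l p.1).card := by
  rw [PP, Finset.sum_product]
  rw [← Finset.sum_div, div_div]
  ring_nf

end AuxPP


/-- If `f ∈ Λ_α(X×Y)` with constant `C`, then for all admissible `l`
and `s`: `sup |Q^lP^s f| ≤ 2C·2^{−lα}`, `sup |P^lQ^s f| ≤ 2C·2^{−sα}`, and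
`sup |Q^lQ^s f| ≤ 4C·2^{−(l+s)α}`. -/
theorem tensor_difference_operator_bounds (α : ℝ) (hα : 0 < α)
    {X Y : Type} [Fintype X] [Fintype Y] {L S : ℕ}
    (TX : DyadicTree X L) (TY : DyadicTree Y S)
    (C : ℝ) (f : X × Y → ℝ) (hf : HolderRect TX TY α C f) :
    (∀ l < L, ∀ s ≤ S, ∀ p : X × Y,
      |QP TX TY l s f p| ≤ 2 * C * (2 : ℝ) ^ (-(l : ℝ) * α)) ∧
    (∀ l ≤ L, ∀ s < S, ∀ p : X × Y,
      |PQ TX TY l s f p| ≤ 2 * C * (2 : ℝ) ^ (-(s : ℝ) * α)) ∧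
    (∀ l < L, ∀ s < S, ∀ p : X × Y,
      |QQ TX TY l s f p| ≤ 4 * C * (2 : ℝ) ^ (-((l : ℝ) + (s : ℝ)) * α)) := by
  obtain ⟨hmix, hXh, hYh⟩ := hf
  refine ⟨?_, ?_, ?_⟩
  · -- QP bound
    intro l hl s hs p
    have hC : 0 ≤ C := TX.holder_C_nonneg' (by omega) hα (fun x x' => hXh x x' p.2)
    have hA'ne := TX.cell_nonempty' (by omega : l + 1 ≤ L) p.1
    have hAne := TX.cell_nonempty' hl.le p.1
    have hBne := TY.cell_nonempty' hs p.2
    have hsub := TX.cell_succ_subset' hl p.1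
    set G : Y → ℝ := fun y =>
      (∑ x ∈ TX.cell (l + 1) p.1, f (x, y)) / (TX.cell (l + 1) p.1).card -
      (∑ x ∈ TX.cell l p.1, f (x, y)) / (TX.cell l p.1).card with hG
    have hQP : QP TX TY l s f p
        = (∑ y ∈ TY.cell s p.2, G y) / (TY.cell s p.2).card := by
      rw [QP, PP_eq_y, PP_eq_y, div_sub_div_same, ← Finset.sum_sub_distrib]
    have hbound : ∀ y ∈ TY.cell s p.2, |G y - 0| ≤ C * (2 : ℝ) ^ (-(l : ℝ) * α) := by
      intro y _hy
      rw [sub_zero]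
      simp only [hG]
      refine avg_sub_avg hA'ne hAne fun a ha b hb => ?_
      calc |f (a, y) - f (b, y)| ≤ C * TX.rho a b ^ α := hXh a b y
        _ ≤ C * (2 : ℝ) ^ (-(l : ℝ) * α) :=
          mul_le_mul_of_nonneg_left (TX.cell_rho_pow_le' hα hl.le (hsub ha) hb) hC
    have hfin := avg_sub_const hBne hbound
    rw [sub_zero] at hfin
    rw [hQP]
    have hpos : (0 : ℝ) < (2 : ℝ) ^ (-(l : ℝ) * α) := Real.rpow_pos_of_pos two_pos _
    nlinarith [hfin, mul_nonneg hC hpos.le]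
  · -- PQ bound
    intro l hl s hs p
    have hC : 0 ≤ C := TY.holder_C_nonneg' (by omega) hα (fun y y' => hYh p.1 y y')
    have hB'ne := TY.cell_nonempty' (by omega : s + 1 ≤ S) p.2
    have hBne := TY.cell_nonempty' hs.le p.2
    have hAne := TX.cell_nonempty' hl p.1
    have hsub := TY.cell_succ_subset' hs p.2
    set G : X → ℝ := fun x =>
      (∑ y ∈ TY.cell (s + 1) p.2, f (x, y)) / (TY.cell (s + 1) p.2).card -
      (∑ y ∈ TY.cell s p.2, f (x, y)) / (TY.cell s p.2).card with hG
    have hPQ : PQ TX TY l s f p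
        = (∑ x ∈ TX.cell l p.1, G x) / (TX.cell l p.1).card := by
      rw [PQ, PP_eq_x, PP_eq_x, div_sub_div_same, ← Finset.sum_sub_distrib]
    have hbound : ∀ x ∈ TX.cell l p.1, |G x - 0| ≤ C * (2 : ℝ) ^ (-(s : ℝ) * α) := by
      intro x _hx
      rw [sub_zero]
      simp only [hG]
      refine avg_sub_avg hB'ne hBne fun a ha b hb => ?_
      calc |f (x, a) - f (x, b)| ≤ C * TY.rho a b ^ α := hYh x a b
        _ ≤ C * (2 : ℝ) ^ (-(s : ℝ) * α) :=
          mul_le_mul_of_nonneg_left (TY.cell_rho_pow_le' hα hs.le (hsub ha) hb) hC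
    have hfin := avg_sub_const hAne hbound
    rw [sub_zero] at hfin
    rw [hPQ]
    have hpos : (0 : ℝ) < (2 : ℝ) ^ (-(s : ℝ) * α) := Real.rpow_pos_of_pos two_pos _
    nlinarith [hfin, mul_nonneg hC hpos.le]
  · -- QQ bound
    intro l hl s hs p
    have hC : 0 ≤ C := TX.holder_C_nonneg' (by omega) hα (fun x x' => hXh x x' p.2)
    have hA'ne := TX.cell_nonempty' (by omega : l + 1 ≤ L) p.1
    have hAne := TX.cell_nonempty' hl.le p.1
    have hB'ne := TY.cell_nonempty' (by omega : s + 1 ≤ S) p.2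
    have hBne := TY.cell_nonempty' hs.le p.2
    have hsubX := TX.cell_succ_subset' hl p.1
    have hsubY := TY.cell_succ_subset' hs p.2
    set G : Y → ℝ := fun y =>
      (∑ x ∈ TX.cell (l + 1) p.1, f (x, y)) / (TX.cell (l + 1) p.1).card -
      (∑ x ∈ TX.cell l p.1, f (x, y)) / (TX.cell l p.1).card with hG
    have key : ∀ s' : ℕ, PP TX TY (l + 1) s' f p - PP TX TY l s' f p
        = (∑ y ∈ TY.cell s' p.2, G y) / (TY.cell s' p.2).card := by
      intro s'
      rw [PP_eq_y, PP_eq_y, div_sub_div_same, ← Finset.sum_sub_distrib]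
    have hQQ : QQ TX TY l s f p
        = (∑ y ∈ TY.cell (s + 1) p.2, G y) / (TY.cell (s + 1) p.2).card
          - (∑ y ∈ TY.cell s p.2, G y) / (TY.cell s p.2).card := by
      rw [QQ, ← key (s + 1), ← key s]; ring
    have hstep : |QQ TX TY l s f p|
        ≤ C * (2 : ℝ) ^ (-(l : ℝ) * α) * (2 : ℝ) ^ (-(s : ℝ) * α) := by
      rw [hQQ]
      refine avg_sub_avg hB'ne hBne fun y' hy' y hy => ?_
      have hG2 : G y' - G y =
          (∑ x ∈ TX.cell (l + 1) p.1, (f (x, y') - f (x, y))) / (TX.cell (l + 1) p.1).card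
          - (∑ x ∈ TX.cell l p.1, (f (x, y') - f (x, y))) / (TX.cell l p.1).card := by
        simp only [hG, Finset.sum_sub_distrib]
        ring
      rw [hG2]
      refine avg_sub_avg hA'ne hAne fun a ha b hb => ?_
      have habs : (f (a, y') - f (a, y)) - (f (b, y') - f (b, y))
          = f (a, y') - f (b, y') - f (a, y) + f (b, y) := by ring
      rw [habs]
      have h1 := TX.cell_rho_pow_le' hα hl.le (hsubX ha) hb
      have h2 := TY.cell_rho_pow_le' hα hs.le (hsubY hy') hy
      have n1 : 0 ≤ TX.rho a b ^ α := Real.rpow_nonneg (TX.rho_nonneg' a b) α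
      have n2 : 0 ≤ TY.rho y' y ^ α := Real.rpow_nonneg (TY.rho_nonneg' y' y) α
      calc |f (a, y') - f (b, y') - f (a, y) + f (b, y)|
          ≤ C * TX.rho a b ^ α * TY.rho y' y ^ α := hmix a b y' y
        _ ≤ C * (2 : ℝ) ^ (-(l : ℝ) * α) * (2 : ℝ) ^ (-(s : ℝ) * α) := by
            have p1 : (0 : ℝ) ≤ (2 : ℝ) ^ (-(l : ℝ) * α) := by positivity
            gcongr
    have heq : C * (2 : ℝ) ^ (-(l : ℝ) * α) * (2 : ℝ) ^ (-(s : ℝ) * α)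
        = C * (2 : ℝ) ^ (-((l : ℝ) + (s : ℝ)) * α) := by
      rw [mul_assoc, ← Real.rpow_add two_pos]
      congr 2
      ring
    rw [heq] at hstep
    have hpos : (0 : ℝ) < (2 : ℝ) ^ (-((l : ℝ) + (s : ℝ)) * α) := Real.rpow_pos_of_pos two_pos _
    nlinarith [hstep, mul_nonneg hC hpos.le]
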